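/- For λ ∈ ℂ, Δ(0,λ) = 0 if and only if there exist n ∈ ℤ and k ∈ {0, 1, 2} such that λ = 2nπ·ω^k. In particular, the real zeros of Δ(0,·) are exactly the numbers λₙ = 2nπ, n ∈ ℤ. -/
import Mathlib


open Complex

/-- ω = exp(2πi/3), a primitive cube root of unity. -/
noncomputable def ω : ℂ := Complex.exp (2 * Real.pi * Complex.I / 3)

/-- c(z) = (1/3)·∑_{k=1}^{3} exp(ω^k z). -/
noncomputable def cf (z : ℂ) : ℂ :=
  (1/3) * (Complex.exp (ω ^ 1 * z) + Complex.exp (ω ^ 2 * z) + Complex.exp (ω ^ 3 * z))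

/-- s(z) = (1/3)·∑_{k=1}^{3} ω^{-k} exp(ω^k z). -/
noncomputable def sf (z : ℂ) : ℂ :=
  (1/3) * ((ω ^ 1)⁻¹ * Complex.exp (ω ^ 1 * z) + (ω ^ 2)⁻¹ * Complex.exp (ω ^ 2 * z) +
    (ω ^ 3)⁻¹ * Complex.exp (ω ^ 3 * z))

/-- d(z) = (1/3)·∑_{k=1}^{3} ω^k exp(ω^k z). -/
noncomputable def df (z : ℂ) : ℂ :=
  (1/3) * (ω ^ 1 * Complex.exp (ω ^ 1 * z) + ω ^ 2 * Complex.exp (ω ^ 2 * z) +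
    ω ^ 3 * Complex.exp (ω ^ 3 * z))

/-- Δ(0,λ) = 3·(c(iλ) − c(−iλ)). -/
noncomputable def Δ₀ (lam : ℂ) : ℂ := 3 * (cf (Complex.I * lam) - cf (-(Complex.I * lam)))

lemma ω_cube : ω ^ 3 = 1 := by
  rw [ω, ← Complex.exp_nat_mul]
  rw [show (3:ℕ) * (2 * (Real.pi:ℂ) * Complex.I / 3) = 2 * Real.pi * Complex.I by push_cast; ring]
  exact Complex.exp_two_pi_mul_I

lemma ω_im : ω.im = Real.sin (2 * Real.pi / 3) := by
  rw [ω, Complex.exp_im]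
  have h1 : (2 * (Real.pi:ℂ) * Complex.I / 3).re = 0 := by simp
  have h2 : (2 * (Real.pi:ℂ) * Complex.I / 3).im = 2 * Real.pi / 3 := by
    simp [Complex.div_im, Complex.mul_im]
  rw [h1, h2, Real.exp_zero, one_mul]

lemma ω_im_pos : 0 < ω.im := by
  rw [ω_im]
  apply Real.sin_pos_of_pos_of_lt_pi
  · positivity
  · nlinarith [Real.pi_pos]

lemma ω_sq_im_neg : (ω ^ 2).im < 0 := by
  have h : ω ^ 2 = Complex.exp (2 * Real.pi * Complex.I / 3 + 2 * Real.pi * Complex.I / 3) := by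
    rw [Complex.exp_add, ω]; ring
  rw [h, Complex.exp_im]
  have h1 : (2 * (Real.pi:ℂ) * Complex.I / 3 + 2 * Real.pi * Complex.I / 3).re = 0 := by simp
  have h2 : (2 * (Real.pi:ℂ) * Complex.I / 3 + 2 * Real.pi * Complex.I / 3).im
      = Real.pi / 3 + Real.pi := by
    simp [Complex.div_im, Complex.mul_im]; ring
  rw [h1, h2, Real.exp_zero, one_mul]
  have h3 : Real.sin (Real.pi / 3 + Real.pi) = - Real.sin (Real.pi / 3) := Real.sin_add_pi _
  rw [h3, neg_lt, neg_zero]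
  apply Real.sin_pos_of_pos_of_lt_pi
  · positivity
  · linarith [Real.pi_pos]

lemma ω_ne_zero : ω ≠ 0 := Complex.exp_ne_zero _

lemma ω_ne_one : ω ≠ 1 := by
  intro h
  have := ω_im_pos
  rw [h] at this
  simp at this

lemma ω_sum : 1 + ω + ω ^ 2 = 0 := by
  have h : (ω - 1) * (1 + ω + ω ^ 2) = 0 := by
    linear_combination ω_cube
  rcases mul_eq_zero.1 h with h' | h'
  · exact absurd (by linear_combination h' : ω = 1) ω_ne_one
  · exact h'

lemma key (lam : ℂ) : Δ₀ lam =
    -8 * I * Complex.sin (lam / 2) * Complex.sin (ω * lam / 2) *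
      Complex.sin (ω ^ 2 * lam / 2) := by
  have hI4 : (I:ℂ) ^ 4 = 1 := by simp [pow_succ, Complex.I_mul_I]
  set p := Complex.exp (I * lam / 2) with hp
  set q := Complex.exp (I * ω * lam / 2) with hq
  set r := Complex.exp (I * ω ^ 2 * lam / 2) with hr
  have h1 : Complex.exp (lam / 2 * I) = p := by rw [hp]; congr 1; ring
  have h2 : Complex.exp (-(lam / 2) * I) = q * r := by
    rw [hq, hr, ← Complex.exp_add]; congr 1; linear_combination (-(I * lam / 2)) * ω_sum
  have h3 : Complex.exp (ω * lam / 2 * I) = q := by rw [hq]; congr 1; ring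
  have h4 : Complex.exp (-(ω * lam / 2) * I) = p * r := by
    rw [hp, hr, ← Complex.exp_add]; congr 1; linear_combination (-(I * lam / 2)) * ω_sum
  have h5 : Complex.exp (ω ^ 2 * lam / 2 * I) = r := by rw [hr]; congr 1; ring
  have h6 : Complex.exp (-(ω ^ 2 * lam / 2) * I) = p * q := by
    rw [hp, hq, ← Complex.exp_add]; congr 1; linear_combination (-(I * lam / 2)) * ω_sum
  have e1 : Complex.exp (ω ^ 1 * (I * lam)) = q * q := by
    rw [hq, ← Complex.exp_add]; congr 1; ring
  have e2 : Complex.exp (ω ^ 2 * (I * lam)) = r * r := by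
    rw [hr, ← Complex.exp_add]; congr 1; ring
  have e3 : Complex.exp (ω ^ 3 * (I * lam)) = p * p := by
    rw [hp, ← Complex.exp_add]; congr 1; linear_combination (I * lam) * ω_cube
  have e4 : Complex.exp (ω ^ 1 * -(I * lam)) = p * p * r * r := by
    rw [hp, hr, ← Complex.exp_add, ← Complex.exp_add, ← Complex.exp_add]
    congr 1; linear_combination (-(I * lam)) * ω_sum
  have e5 : Complex.exp (ω ^ 2 * -(I * lam)) = p * p * q * q := by
    rw [hp, hq, ← Complex.exp_add, ← Complex.exp_add, ← Complex.exp_add]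
    congr 1; linear_combination (-(I * lam)) * ω_sum
  have e6 : Complex.exp (ω ^ 3 * -(I * lam)) = q * q * r * r := by
    rw [hq, hr, ← Complex.exp_add, ← Complex.exp_add, ← Complex.exp_add]
    congr 1; linear_combination (-(I * lam)) * ω_cube + (-(I * lam)) * ω_sum
  have hpqr : p * q * r = 1 := by
    rw [hp, hq, hr, ← Complex.exp_add, ← Complex.exp_add, ← Complex.exp_zero]
    congr 1; linear_combination (I * lam / 2) * ω_sum
  simp only [Δ₀, cf, Complex.sin, h1, h2, h3, h4, h5, h6, e1, e2, e3, e4, e5, e6]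
  linear_combination (p * q * r - p ^ 2 - q ^ 2 - r ^ 2) * hpqr +
    ((q * r - p) * (p * r - q) * (p * q - r)) * hI4

lemma zero_iff (lam : ℂ) : Δ₀ lam = 0 ↔
    Complex.sin (lam / 2) = 0 ∨ Complex.sin (ω * lam / 2) = 0 ∨
      Complex.sin (ω ^ 2 * lam / 2) = 0 := by
  rw [key]
  have h8 : (-8 : ℂ) * I ≠ 0 := by simp [Complex.I_ne_zero]
  constructor
  · intro h
    rcases mul_eq_zero.1 h with h | h
    · rcases mul_eq_zero.1 h with h | h
      · rcases mul_eq_zero.1 h with h | h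
        · exact absurd h h8
        · exact Or.inl h
      · exact Or.inr (Or.inl h)
    · exact Or.inr (Or.inr h)
  · rintro (h | h | h) <;> simp [h]


/-- the zeros of Δ(0,·) are 2nπ·ω^k; the real zeros are 2nπ, n ∈ ℤ. -/
theorem stmt_11 :
    (∀ lam : ℂ, Δ₀ lam = 0 ↔
      ∃ n : ℤ, ∃ k ∈ ({0, 1, 2} : Set ℕ), lam = 2 * n * Real.pi * ω ^ k) ∧
    (∀ x : ℝ, Δ₀ (x : ℂ) = 0 ↔ ∃ n : ℤ, x = 2 * n * Real.pi) := by

  have main : ∀ lam : ℂ, Δ₀ lam = 0 ↔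
      ∃ n : ℤ, ∃ k ∈ ({0, 1, 2} : Set ℕ), lam = 2 * n * Real.pi * ω ^ k := by
    intro lam
    rw [zero_iff]
    constructor
    · rintro (h | h | h)
      · obtain ⟨n, hn⟩ := Complex.sin_eq_zero_iff.1 h
        exact ⟨n, 0, by simp, by rw [pow_zero, mul_one]; linear_combination 2 * hn⟩
      · obtain ⟨n, hn⟩ := Complex.sin_eq_zero_iff.1 h
        refine ⟨n, 2, by simp, ?_⟩
        linear_combination 2 * ω ^ 2 * hn + (-lam) * ω_cube
      · obtain ⟨n, hn⟩ := Complex.sin_eq_zero_iff.1 h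
        refine ⟨n, 1, by simp, ?_⟩
        rw [pow_one]
        linear_combination 2 * ω * hn + (-lam) * ω_cube
    · rintro ⟨n, k, hk, rfl⟩
      simp only [Set.mem_insert_iff, Set.mem_singleton_iff] at hk
      rcases hk with rfl | rfl | rfl
      · exact Or.inl (Complex.sin_eq_zero_iff.2 ⟨n, by rw [pow_zero]; ring⟩)
      · refine Or.inr (Or.inr (Complex.sin_eq_zero_iff.2 ⟨n, ?_⟩))
        rw [pow_one]
        linear_combination (n * Real.pi) * ω_cube
      · refine Or.inr (Or.inl (Complex.sin_eq_zero_iff.2 ⟨n, ?_⟩))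
        linear_combination (n * Real.pi) * ω_cube
  refine ⟨main, fun x => ?_⟩
  rw [main]
  constructor
  · rintro ⟨n, k, hk, hx⟩
    simp only [Set.mem_insert_iff, Set.mem_singleton_iff] at hk
    have him := congrArg Complex.im hx
    rcases hk with rfl | rfl | rfl
    · refine ⟨n, ?_⟩
      rw [pow_zero, mul_one] at hx
      exact_mod_cast hx
    · -- ω^1 : imaginary part forces n = 0
      rw [pow_one] at hx
      have h1 : (2 * (n:ℂ) * Real.pi * ω) = ((2 * n * Real.pi : ℝ) : ℂ) * ω := by
        push_cast; ring
      rw [pow_one, h1] at him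
      simp only [Complex.ofReal_im, Complex.mul_im, Complex.ofReal_re, zero_mul, add_zero] at him
      have hn : (2 * (n:ℝ) * Real.pi) = 0 := by
        rcases mul_eq_zero.1 him.symm with h | h
        · exact h
        · exact absurd h (ne_of_gt ω_im_pos)
      have hn0 : (n:ℝ) = 0 := by
        rcases mul_eq_zero.1 hn with h | h
        · rcases mul_eq_zero.1 h with h' | h'
          · norm_num at h'
          · exact h'
        · exact absurd h Real.pi_ne_zero
      have : n = 0 := by exact_mod_cast hn0
      subst this
      refine ⟨0, ?_⟩
      have : (x:ℂ) = 0 := by rw [hx]; push_cast; ring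
      have : x = 0 := by exact_mod_cast this
      simp [this]
    · have h1 : (2 * (n:ℂ) * Real.pi * ω ^ 2) = ((2 * n * Real.pi : ℝ) : ℂ) * ω ^ 2 := by
        push_cast; ring
      rw [h1] at him
      simp only [Complex.ofReal_im, Complex.mul_im, Complex.ofReal_re, zero_mul, add_zero] at him
      have hn : (2 * (n:ℝ) * Real.pi) = 0 := by
        rcases mul_eq_zero.1 him.symm with h | h
        · exact h
        · exact absurd h (ne_of_lt ω_sq_im_neg)
      have hn0 : (n:ℝ) = 0 := by
        rcases mul_eq_zero.1 hn with h | h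
        · rcases mul_eq_zero.1 h with h' | h'
          · norm_num at h'
          · exact h'
        · exact absurd h Real.pi_ne_zero
      have : n = 0 := by exact_mod_cast hn0
      subst this
      refine ⟨0, ?_⟩
      have : (x:ℂ) = 0 := by rw [hx]; push_cast; ring
      have : x = 0 := by exact_mod_cast this
      simp [this]
  · rintro ⟨n, rfl⟩
    exact ⟨n, 0, by simp, by rw [pow_zero, mul_one]; push_cast; ring⟩
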